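/- arXiv:1703.07773 — 4 statements merged into one kernel-verified Lean document; each statement's English description precedes it below -/
import Mathlib

section
/- Let a, b, σ, α be real numbers with a + b < 0 and ab + σα > 0. Then for every complex λ with Re λ ≥ 0 and every real k, the polynomial χ(t) = t⁴ + 2ct³ + (c² + a + b − 2λ)t² + c(a + b − 2λ)t + ab − λ(a+b) + λ² + σα does not vanish at t = ik. Equivalently, the asymptotic matrix has no purely imaginary eigenvalues for λ in the closed right half-plane. -/
open Complex

theorem stmt_0 (a b c σ α : ℝ) (htr : a + b < 0) (hdet : a * b + σ * α > 0)
    (lam : ℂ) (hlam : 0 ≤ lam.re) (k : ℝ) :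
    (Complex.I * k) ^ 4 + 2 * (c : ℂ) * (Complex.I * k) ^ 3
      + ((c : ℂ) ^ 2 + a + b - 2 * lam) * (Complex.I * k) ^ 2
      + (c : ℂ) * ((a : ℂ) + b - 2 * lam) * (Complex.I * k)
      + (a : ℂ) * b - lam * ((a : ℂ) + b) + lam ^ 2 + (σ : ℂ) * α ≠ 0 := by
  intro h
  rw [Complex.ext_iff] at h
  obtain ⟨h1, h2⟩ := h
  simp [pow_succ, Complex.add_re, Complex.add_im, Complex.mul_re, Complex.mul_im,
    Complex.sub_re, Complex.sub_im, Complex.I_re, Complex.I_im, Complex.ofReal_re,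
    Complex.ofReal_im] at h1 h2
  set x := lam.re
  set y := lam.im
  have hlin : 2 * (-k^2 - x) + (a + b) < 0 := by nlinarith [sq_nonneg k]
  have hfac : (c * k - y) * (2 * (-k^2 - x) + (a + b)) = 0 := by linear_combination h2
  have hv : c * k - y = 0 := by
    rcases mul_eq_zero.1 hfac with h' | h'
    · exact h'
    · exact absurd h' (ne_of_lt hlin)
  nlinarith [sq_nonneg (-k^2 - x), mul_nonneg (neg_nonneg.2 (le_of_lt htr))
    (by nlinarith [sq_nonneg k] : (0:ℝ) ≤ k^2 + x), sq_nonneg (c*k - y)]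
end

section
/- Suppose u(z), v(z) are solutions of Y' = A(z)Y with A(z)ᵀJ + JA(z) = −cJ, c < 0, and suppose there exist real μ₃, μ₄ with μ₃ + μ₄ > −c such that e^{−μ₃ z} u(z) and e^{−μ₄ z} v(z) remain bounded as z → −∞. Then ω(u(z), v(z)) = 0 for all z. -/
open Matrix Filter

def J4 : Matrix (Fin 4) (Fin 4) ℝ :=
  !![0, 0, 1, 0; 0, 0, 0, -1; -1, 0, 0, 0; 0, 1, 0, 0]

def omega4 (a b : Fin 4 → ℝ) : ℝ := a ⬝ᵥ (J4 *ᵥ b)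

/-! With `k = -c`, the identity `Aᵀ J + J A = k J` makes `f z = ω(u z, v z)` solve `f' = k f`,
so `f z = e^{k z} f 0`. The growth bounds give `f z = O(e^{(μ₃ + μ₄) z})` as `z → -∞`, and since
`k < μ₃ + μ₄` this forces `f 0 = 0`. -/

theorem Matrix.dotProduct_mulVec_mulVec_add_of_transpose_mul_add_eq_smul
    {n R : Type*} [Fintype n] [CommRing R] {A J : Matrix n n R} {k : R}
    (h : Aᵀ * J + J * A = k • J) (a b : n → R) :
    a ⬝ᵥ (J *ᵥ (A *ᵥ b)) + (A *ᵥ a) ⬝ᵥ (J *ᵥ b) = k * (a ⬝ᵥ (J *ᵥ b)) := by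
  rw [mulVec_mulVec, ← vecMul_transpose A a, ← dotProduct_mulVec, mulVec_mulVec,
    ← dotProduct_add, ← add_mulVec, add_comm, h, smul_mulVec, dotProduct_smul, smul_eq_mul]

theorem eq_exp_mul_mul_of_hasDerivAt {f : ℝ → ℝ} {k : ℝ} (hf : ∀ z, HasDerivAt f (k * f z) z)
    (z : ℝ) : f z = Real.exp (k * z) * f 0 := by
  have hderiv (x : ℝ) : HasDerivAt (fun x => Real.exp (-k * x) * f x) 0 x := by
    refine (((hasDerivAt_id' x).const_mul (-k)).exp.fun_mul (hf x)).congr_deriv ?_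
    ring
  have hconst := is_const_of_deriv_eq_zero (fun x => (hderiv x).differentiableAt)
    (fun x => (hderiv x).deriv) z 0
  simp only [mul_zero, Real.exp_zero, one_mul] at hconst
  rw [← hconst, ← mul_assoc, ← Real.exp_add]
  simp

theorem eq_zero_of_isBoundedUnder_exp_mul_atBot {a C : ℝ} (ha : a < 0)
    (h : IsBoundedUnder (· ≤ ·) atBot fun z => ‖Real.exp (a * z) * C‖) : C = 0 := by
  by_contra hC
  refine not_isBoundedUnder_of_tendsto_atTop ?_ h
  simp only [norm_mul, Real.norm_eq_abs, Real.abs_exp]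
  refine Tendsto.atTop_mul_const (abs_pos.2 hC) (Real.tendsto_exp_atTop.comp ?_)
  exact tendsto_id.const_mul_atBot_of_neg ha

theorem ContinuousLinearMap.isBoundedUnder_norm_apply_apply {E F G α : Type*}
    [SeminormedAddCommGroup E] [NormedSpace ℝ E] [SeminormedAddCommGroup F] [NormedSpace ℝ F]
    [SeminormedAddCommGroup G] [NormedSpace ℝ G] (B : E →L[ℝ] F →L[ℝ] G) {l : Filter α}
    {x : α → E} {y : α → F} (hx : IsBoundedUnder (· ≤ ·) l fun t => ‖x t‖)
    (hy : IsBoundedUnder (· ≤ ·) l fun t => ‖y t‖) :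
    IsBoundedUnder (· ≤ ·) l fun t => ‖B (x t) (y t)‖ := by
  rw [← Asymptotics.isBigO_one_iff ℝ] at hx hy ⊢
  exact B.isBoundedBilinearMap.isBigO_comp.trans (by simpa using hx.norm_left.mul hy.norm_left)

theorem ContinuousLinearMap.apply_apply_eq_zero_of_conformal_flow {E : Type*}
    [NormedAddCommGroup E] [NormedSpace ℝ E] (B : E →L[ℝ] E →L[ℝ] ℝ)
    {u v u' v' : ℝ → E} {k μ ν : ℝ} (hk : k < μ + ν)
    (hu : ∀ z, HasDerivAt u (u' z) z) (hv : ∀ z, HasDerivAt v (v' z) z)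
    (hB : ∀ z, B (u z) (v' z) + B (u' z) (v z) = k * B (u z) (v z))
    (hubd : IsBoundedUnder (· ≤ ·) atBot fun z => ‖Real.exp (-μ * z) • u z‖)
    (hvbd : IsBoundedUnder (· ≤ ·) atBot fun z => ‖Real.exp (-ν * z) • v z‖) (z : ℝ) :
    B (u z) (v z) = 0 := by
  have hderiv (z : ℝ) : HasDerivAt (fun z => B (u z) (v z)) (k * B (u z) (v z)) z :=
    (B.hasDerivAt_of_bilinear (fun _ => hu z) (fun _ => hv z)).congr_deriv (hB z)
  have hexp := eq_exp_mul_mul_of_hasDerivAt hderiv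
  suffices B (u 0) (v 0) = 0 by rw [hexp, this, mul_zero]
  have hscaled (z : ℝ) : B (Real.exp (-μ * z) • u z) (Real.exp (-ν * z) • v z) =
      Real.exp ((k - (μ + ν)) * z) * B (u 0) (v 0) := by
    rw [map_smul, map_smul, FunLike.coe_smul, Pi.smul_apply, hexp, smul_eq_mul,
      smul_eq_mul, ← mul_assoc, ← mul_assoc, ← Real.exp_add, ← Real.exp_add]
    ring_nf
  refine eq_zero_of_isBoundedUnder_exp_mul_atBot (a := k - (μ + ν)) (by linarith) ?_
  simpa only [hscaled] using B.isBoundedUnder_norm_apply_apply hubd hvbd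

theorem stmt_8_general (c : ℝ) (A : ℝ → Matrix (Fin 4) (Fin 4) ℝ)
    (hA : ∀ z, (A z)ᵀ * J4 + J4 * A z = (-c) • J4)
    (u v : ℝ → Fin 4 → ℝ)
    (hu : ∀ z, HasDerivAt u (A z *ᵥ u z) z)
    (hv : ∀ z, HasDerivAt v (A z *ᵥ v z) z)
    (μ₃ μ₄ : ℝ) (hsum : -c < μ₃ + μ₄)
    (hubd : IsBoundedUnder (· ≤ ·) atBot (fun z => ‖Real.exp (-μ₃ * z) • u z‖))
    (hvbd : IsBoundedUnder (· ≤ ·) atBot (fun z => ‖Real.exp (-μ₄ * z) • v z‖)) :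
    ∀ z, omega4 (u z) (v z) = 0 := by
  set B := (toLinearMap₂' ℝ J4 : (Fin 4 → ℝ) →ₗ[ℝ] (Fin 4 → ℝ) →ₗ[ℝ] ℝ).toContinuousBilinearMap
  have hB (a b : Fin 4 → ℝ) : B a b = omega4 a b := toLinearMap₂'_apply' J4 a b
  intro z
  rw [← hB]
  refine B.apply_apply_eq_zero_of_conformal_flow hsum hu hv (fun z => ?_) hubd hvbd z
  simpa only [hB, omega4] using dotProduct_mulVec_mulVec_add_of_transpose_mul_add_eq_smul (hA z) _ _

theorem stmt_8 (c : ℝ) (hc : c < 0) (A : ℝ → Matrix (Fin 4) (Fin 4) ℝ)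
    (hA : ∀ z, (A z)ᵀ * J4 + J4 * A z = (-c) • J4)
    (u v : ℝ → Fin 4 → ℝ)
    (hu : ∀ z, HasDerivAt u (A z *ᵥ u z) z)
    (hv : ∀ z, HasDerivAt v (A z *ᵥ v z) z)
    (μ₃ μ₄ : ℝ) (hsum : -c < μ₃ + μ₄)
    (hubd : IsBoundedUnder (· ≤ ·) atBot (fun z => ‖Real.exp (-μ₃ * z) • u z‖))
    (hvbd : IsBoundedUnder (· ≤ ·) atBot (fun z => ‖Real.exp (-μ₄ * z) • v z‖)) :
    ∀ z, omega4 (u z) (v z) = 0 :=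
  stmt_8_general c A hA u v hu hv μ₃ μ₄ hsum hubd hvbd
end

section
/- For any four vectors a₁, a₂, b₁, b₂ ∈ ℝ⁴ and the symplectic form ω(a,b) = ⟨a, Jb⟩ with J the matrix with rows (0,0,1,0), (0,0,0,−1), (−1,0,0,0), (0,1,0,0), one has det[a₁ a₂ b₁ b₂] = −det[[ω(a₁,b₁), ω(a₁,b₂)],[ω(a₂,b₁), ω(a₂,b₂)]] + ω(a₁,a₂)·ω(b₁,b₂). -/
open Matrix

lemma sab00 : Fin.succAbove (0:Fin 4) 0 = 1 := rfl
lemma sab01 : Fin.succAbove (0:Fin 4) 1 = 2 := rfl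
lemma sab02 : Fin.succAbove (0:Fin 4) 2 = 3 := rfl
lemma sab10 : Fin.succAbove (1:Fin 4) 0 = 0 := rfl
lemma sab11 : Fin.succAbove (1:Fin 4) 1 = 2 := rfl
lemma sab12 : Fin.succAbove (1:Fin 4) 2 = 3 := rfl
lemma sab20 : Fin.succAbove (2:Fin 4) 0 = 0 := rfl
lemma sab21 : Fin.succAbove (2:Fin 4) 1 = 1 := rfl
lemma sab22 : Fin.succAbove (2:Fin 4) 2 = 3 := rfl
lemma sab30 : Fin.succAbove (3:Fin 4) 0 = 0 := rfl
lemma sab31 : Fin.succAbove (3:Fin 4) 1 = 1 := rfl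
lemma sab32 : Fin.succAbove (3:Fin 4) 2 = 2 := rfl
lemma fsucc2 : (Fin.succ 2 : Fin 4) = 3 := rfl
lemma fsab : Fin.succAbove (2:Fin 4) 2 = 3 := rfl
lemma fcs : Fin.castSucc (2:Fin 3) = 2 := rfl

theorem stmt_9 (a₁ a₂ b₁ b₂ : Fin 4 → ℝ) :
    (Matrix.of fun i j => ![a₁, a₂, b₁, b₂] j i).det =
      -(!![omega4 a₁ b₁, omega4 a₁ b₂; omega4 a₂ b₁, omega4 a₂ b₂] : Matrix (Fin 2) (Fin 2) ℝ).det
        + omega4 a₁ a₂ * omega4 b₁ b₂ := by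
  simp [omega4, J4, Matrix.det_succ_row_zero, Matrix.det_fin_two, mulVec, dotProduct,
    Fin.sum_univ_succ, Fin.sum_univ_four, fsucc2, fsab, fcs, sab00, sab01, sab02, sab10, sab11, sab12, sab20, sab21, sab22, sab30, sab31, sab32]
  ring
end

section
/- (Two-dimensional crossing forces β'(z*) = 0.) Let u₁, u₂, u₃(z), u₄(z) be ℝ⁴-valued with u₃, u₄ differentiable, and suppose at z = z* the span of {u₃(z*), u₄(z*)} equals the span of {u₁, u₂}. Then for β(z) := det[u₁, u₂, u₃(z), u₄(z)] and any matrices with u₃' = A u₃, u₄' = A u₄, one has β(z*) = 0 and β'(z*) = 0, and β''(z*) = 2·det[u₁, u₂, A(z*)u₃(z*), A(z*)u₄(z*)]. -/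
/-!
Write `β z = B (u₃ z) (u₄ z)` with the continuous bilinear form `B v w = det[u₁, u₂, v, w]`.
At a two-dimensional crossing both `u₃ z*` and `u₄ z*` lie in `span {u₁, u₂}`, so `B (u₃ z*) ·` and
`B · (u₄ z*)` vanish identically. The Leibniz rule then kills `β` and `β'` at `z*`, and of the
terms of `β''(z*)` only the two in which both factors are differentiated survive.
-/

open Matrix

section BilinearCrossing

variable {E F G : Type*} [NormedAddCommGroup E] [NormedSpace ℝ E] [NormedAddCommGroup F]
  [NormedSpace ℝ F] [NormedAddCommGroup G] [NormedSpace ℝ G]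
  (B : E →L[ℝ] F →L[ℝ] G) {x X : ℝ → E} {y Y : ℝ → F}

theorem hasDerivAt_bilinear {z : ℝ} {x' : E} {y' : F} (hx : HasDerivAt x x' z)
    (hy : HasDerivAt y y' z) :
    HasDerivAt (fun t => B (x t) (y t)) (B x' (y z) + B (x z) y') z :=
  (B.hasFDerivAt.comp_hasDerivAt z hx).clm_apply hy

theorem deriv_bilinear_eq (hx : ∀ z, HasDerivAt x (X z) z) (hy : ∀ z, HasDerivAt y (Y z) z) :
    deriv (fun t => B (x t) (y t)) = fun z => B (X z) (y z) + B (x z) (Y z) :=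
  funext fun z => (hasDerivAt_bilinear B (hx z) (hy z)).deriv

theorem bilinear_crossing (hx : ∀ z, HasDerivAt x (X z) z) (hy : ∀ z, HasDerivAt y (Y z) z)
    {zs : ℝ} (hX : DifferentiableAt ℝ X zs) (hY : DifferentiableAt ℝ Y zs)
    (hx₀ : ∀ w, B (x zs) w = 0) (hy₀ : ∀ v, B v (y zs) = 0) :
    B (x zs) (y zs) = 0 ∧ deriv (fun t => B (x t) (y t)) zs = 0 ∧
      deriv (deriv fun t => B (x t) (y t)) zs = 2 • B (X zs) (Y zs) := by
  refine ⟨hx₀ _, ?_, ?_⟩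
  · rw [deriv_bilinear_eq B hx hy]
    simp only [hx₀, hy₀, add_zero]
  · have h₁ := hasDerivAt_bilinear B hX.hasDerivAt (hy zs)
    have h₂ := hasDerivAt_bilinear B (hx zs) hY.hasDerivAt
    rw [deriv_bilinear_eq B hx hy, (h₁.fun_add h₂).deriv, hx₀, hy₀]
    simp only [add_zero, zero_add, two_nsmul]

end BilinearCrossing

theorem update_vecCons_two {α : Type*} (a b c d x : α) :
    Function.update ![a, b, c, d] 2 x = ![a, b, x, d] := by
  funext i; fin_cases i <;> rfl

theorem update_vecCons_three {α : Type*} (a b c d x : α) :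
    Function.update ![a, b, c, d] 3 x = ![a, b, c, x] := by
  funext i; fin_cases i <;> rfl

noncomputable def detCols (u₁ u₂ : Fin 4 → ℝ) : (Fin 4 → ℝ) →L[ℝ] (Fin 4 → ℝ) →L[ℝ] ℝ :=
  LinearMap.toContinuousLinearMap <| LinearMap.toContinuousLinearMap.toLinearMap ∘ₗ
    LinearMap.mk₂ ℝ (fun v w => detRowAlternating ![u₁, u₂, v, w])
      (fun v v' w => by
        simpa only [update_vecCons_two] using detRowAlternating.map_update_add ![u₁, u₂, v, w] 2 v v')
      (fun c v w => by
        simpa only [update_vecCons_two] using detRowAlternating.map_update_smul ![u₁, u₂, v, w] 2 c v)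
      (fun v w w' => by
        simpa only [update_vecCons_three] using detRowAlternating.map_update_add ![u₁, u₂, v, w] 3 w w')
      (fun c v w => by
        simpa only [update_vecCons_three] using detRowAlternating.map_update_smul ![u₁, u₂, v, w] 3 c w)

theorem detCols_apply (u₁ u₂ v w : Fin 4 → ℝ) :
    detCols u₁ u₂ v w = (Matrix.of fun i j => ![u₁, u₂, v, w] j i).det := by
  rw [← det_transpose]
  rfl

theorem detCols_eq_zero_of_mem_span_left {u₁ u₂ v : Fin 4 → ℝ}
    (hv : v ∈ Submodule.span ℝ {u₁, u₂}) (w : Fin 4 → ℝ) : detCols u₁ u₂ v w = 0 := by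
  obtain ⟨a, b, rfl⟩ := Submodule.mem_span_pair.1 hv
  rw [detCols_apply, ← exists_mulVec_eq_zero_iff]
  refine ⟨![a, b, -1, 0], by simp, ?_⟩
  ext i
  simp [mulVec, dotProduct, Fin.sum_univ_four, mul_comm]

theorem detCols_eq_zero_of_mem_span_right {u₁ u₂ w : Fin 4 → ℝ}
    (hw : w ∈ Submodule.span ℝ {u₁, u₂}) (v : Fin 4 → ℝ) : detCols u₁ u₂ v w = 0 := by
  obtain ⟨a, b, rfl⟩ := Submodule.mem_span_pair.1 hw
  rw [detCols_apply, ← exists_mulVec_eq_zero_iff]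
  refine ⟨![a, b, 0, -1], by simp, ?_⟩
  ext i
  simp [mulVec, dotProduct, Fin.sum_univ_four, mul_comm]

theorem Differentiable.mulVec {m n : Type*} [Fintype n]
    {A : ℝ → Matrix m n ℝ} {u : ℝ → n → ℝ}
    (hA : Differentiable ℝ (fun z i j => A z i j : ℝ → m → n → ℝ)) (hu : Differentiable ℝ u) :
    Differentiable ℝ fun z => A z *ᵥ u z := by
  have hA' : ∀ i j, Differentiable ℝ fun z => A z i j := fun i j =>
    differentiable_pi.1 (differentiable_pi.1 hA i) j
  have hu' : ∀ j, Differentiable ℝ fun z => u z j := differentiable_pi.1 hu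
  refine differentiable_pi.2 fun i => ?_
  simp only [Matrix.mulVec, dotProduct]
  fun_prop

theorem stmt_19 (u₁ u₂ : Fin 4 → ℝ) (u₃ u₄ : ℝ → Fin 4 → ℝ)
    (A : ℝ → Matrix (Fin 4) (Fin 4) ℝ) (hA : Differentiable ℝ (fun z i j => A z i j : ℝ → Fin 4 → Fin 4 → ℝ))
    (hu₃ : ∀ z, HasDerivAt u₃ (A z *ᵥ u₃ z) z)
    (hu₄ : ∀ z, HasDerivAt u₄ (A z *ᵥ u₄ z) z)
    (zs : ℝ)
    (hspan : Submodule.span ℝ ({u₃ zs, u₄ zs} : Set (Fin 4 → ℝ))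
      = Submodule.span ℝ ({u₁, u₂} : Set (Fin 4 → ℝ))) :
    let β : ℝ → ℝ := fun z => (Matrix.of fun i j => ![u₁, u₂, u₃ z, u₄ z] j i).det
    β zs = 0 ∧ deriv β zs = 0 ∧
      deriv (deriv β) zs =
        2 * (Matrix.of fun i j => ![u₁, u₂, A zs *ᵥ u₃ zs, A zs *ᵥ u₄ zs] j i).det := by
  intro β
  have hβ : β = fun z => detCols u₁ u₂ (u₃ z) (u₄ z) := funext fun z => (detCols_apply ..).symm
  have hu₃s : u₃ zs ∈ Submodule.span ℝ {u₁, u₂} := hspan ▸ Submodule.subset_span (by simp)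
  have hu₄s : u₄ zs ∈ Submodule.span ℝ {u₁, u₂} := hspan ▸ Submodule.subset_span (by simp)
  have hAu : ∀ {u : ℝ → Fin 4 → ℝ}, (∀ z, HasDerivAt u (A z *ᵥ u z) z) →
      DifferentiableAt ℝ (fun z => A z *ᵥ u z) zs := fun hu =>
    hA.mulVec (fun z => (hu z).differentiableAt) zs
  obtain ⟨hβ₀, hβ₁, hβ₂⟩ := bilinear_crossing (detCols u₁ u₂) hu₃ hu₄ (hAu hu₃) (hAu hu₄)
    (detCols_eq_zero_of_mem_span_left hu₃s) (detCols_eq_zero_of_mem_span_right hu₄s)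
  rw [hβ]
  exact ⟨hβ₀, hβ₁, by rw [hβ₂, detCols_apply, nsmul_eq_mul, Nat.cast_ofNat]⟩
end
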